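/- For every positive integer k there exists a strongly 2-connected digraph D in which every vertex has out-degree 2 and in-degree 2, every directed cycle of D has length at most 4, and D contains at least k pairwise vertex-disjoint directed cycles of length 4. -/
import Mathlib


/-- A digraph is strongly connected if between any ordered pair of vertices there is a
directed walk. -/
def Digraph.StronglyConnected {V : Type*} (D : Digraph V) : Prop :=
  ∀ u v : V, ∃ (n : ℕ) (f : Fin (n + 1) → V), f 0 = u ∧ f (Fin.last n) = v ∧
    ∀ i : Fin n, D.Adj (f i.castSucc) (f i.succ)

/-- The digraph obtained from `D` by deleting the vertex `w`. -/
def Digraph.deleteVert {V : Type*} (D : Digraph V) (w : V) : Digraph {v : V // v ≠ w} where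
  Adj a b := D.Adj a.1 b.1

/-- A digraph is strongly 2-connected if it has at least three vertices and deleting any
single vertex leaves a strongly connected digraph. -/
def Digraph.StronglyTwoConnected {V : Type*} [Fintype V] (D : Digraph V) : Prop :=
  3 ≤ Fintype.card V ∧ ∀ w : V, (D.deleteVert w).StronglyConnected

/-- The out-degree of a vertex : the number of arcs starting at it. -/
noncomputable def Digraph.outDeg {V : Type*} (D : Digraph V) (v : V) : ℕ :=
  {w : V | D.Adj v w}.ncard

/-- The in-degree of a vertex : the number of arcs ending at it. -/
noncomputable def Digraph.inDeg {V : Type*} (D : Digraph V) (v : V) : ℕ :=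
  {w : V | D.Adj w v}.ncard

/-- `D.HasDirCycleOfLen n` means that `D` contains a directed cycle of length `n`. -/
def Digraph.HasDirCycleOfLen {V : Type*} (D : Digraph V) (n : ℕ) : Prop :=
  1 ≤ n ∧ ∃ f : ZMod n → V, Function.Injective f ∧ ∀ i, D.Adj (f i) (f (i + 1))

def arcRel (n a b : ℕ) : Prop :=
  (a % 2 = 0 ∧ b = a + 1) ∨
  (a % 2 = 0 ∧ 2 ≤ a ∧ b + 2 = a) ∨
  (a % 2 = 1 ∧ a + 3 < n ∧ b = a + 3) ∨
  (a % 2 = 1 ∧ 3 ≤ a ∧ b + 2 = a) ∨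
  (a = 0 ∧ b = 2) ∨
  (a = 1 ∧ b = 0) ∨
  (a + 3 = n ∧ b + 1 = n) ∨
  (a + 1 = n ∧ b + 2 = n)

lemma arc1 {n a b : ℕ} (h1 : a % 2 = 0) (h2 : b = a + 1) : arcRel n a b := Or.inl ⟨h1, h2⟩
lemma arc2 {n a b : ℕ} (h1 : a % 2 = 0) (h2 : 2 ≤ a) (h3 : b + 2 = a) : arcRel n a b :=
  Or.inr (Or.inl ⟨h1, h2, h3⟩)
lemma arc3 {n a b : ℕ} (h1 : a % 2 = 1) (h2 : a + 3 < n) (h3 : b = a + 3) : arcRel n a b :=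
  Or.inr (Or.inr (Or.inl ⟨h1, h2, h3⟩))
lemma arc4 {n a b : ℕ} (h1 : a % 2 = 1) (h2 : 3 ≤ a) (h3 : b + 2 = a) : arcRel n a b :=
  Or.inr (Or.inr (Or.inr (Or.inl ⟨h1, h2, h3⟩)))
lemma arc5 {n a b : ℕ} (h1 : a = 0) (h2 : b = 2) : arcRel n a b :=
  Or.inr (Or.inr (Or.inr (Or.inr (Or.inl ⟨h1, h2⟩))))
lemma arc6 {n a b : ℕ} (h1 : a = 1) (h2 : b = 0) : arcRel n a b :=
  Or.inr (Or.inr (Or.inr (Or.inr (Or.inr (Or.inl ⟨h1, h2⟩)))))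
lemma arc7 {n a b : ℕ} (h1 : a + 3 = n) (h2 : b + 1 = n) : arcRel n a b :=
  Or.inr (Or.inr (Or.inr (Or.inr (Or.inr (Or.inr (Or.inl ⟨h1, h2⟩))))))
lemma arc8 {n a b : ℕ} (h1 : a + 1 = n) (h2 : b + 2 = n) : arcRel n a b :=
  Or.inr (Or.inr (Or.inr (Or.inr (Or.inr (Or.inr (Or.inr ⟨h1, h2⟩))))))

def Dg (n : ℕ) : Digraph (Fin n) where
  Adj a b := arcRel n a.val b.val

lemma dg_irrefl (n : ℕ) (h6 : 6 ≤ n) (v : Fin n) : ¬ (Dg n).Adj v v := by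
  have := v.isLt
  show ¬ arcRel n v.val v.val
  unfold arcRel
  omega

lemma out_val (n : ℕ) (hn : n % 2 = 0) (h6 : 6 ≤ n) (a : ℕ) (ha : a < n) :
    ∃ A B : ℕ, A < n ∧ B < n ∧ A ≠ B ∧ ∀ b, b < n → (arcRel n a b ↔ (b = A ∨ b = B)) := by
  have fwd : ∀ P : Prop, ∀ b, (arcRel n a b → P) → arcRel n a b → P := fun _ _ h => h
  by_cases h0 : a = 0
  · refine ⟨1, 2, by omega, by omega, by omega, fun b hb => ⟨?_, ?_⟩⟩
    · intro h; rcases h with h|h|h|h|h|h|h|h <;> omega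
    · rintro (h | h)
      · exact arc1 (by omega) (by omega)
      · exact arc5 (by omega) (by omega)
  by_cases h1 : a = 1
  · refine ⟨4, 0, by omega, by omega, by omega, fun b hb => ⟨?_, ?_⟩⟩
    · intro h; rcases h with h|h|h|h|h|h|h|h <;> omega
    · rintro (h | h)
      · exact arc3 (by omega) (by omega) (by omega)
      · exact arc6 (by omega) (by omega)
  by_cases hp : a % 2 = 0
  · refine ⟨a + 1, a - 2, by omega, by omega, by omega, fun b hb => ⟨?_, ?_⟩⟩
    · intro h; rcases h with h|h|h|h|h|h|h|h <;> omega
    · rintro (h | h)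
      · exact arc1 (by omega) (by omega)
      · exact arc2 (by omega) (by omega) (by omega)
  by_cases ht : a + 1 = n
  · refine ⟨n - 3, n - 2, by omega, by omega, by omega, fun b hb => ⟨?_, ?_⟩⟩
    · intro h; rcases h with h|h|h|h|h|h|h|h <;> omega
    · rintro (h | h)
      · exact arc4 (by omega) (by omega) (by omega)
      · exact arc8 (by omega) (by omega)
  by_cases ht2 : a + 3 = n
  · refine ⟨n - 5, n - 1, by omega, by omega, by omega, fun b hb => ⟨?_, ?_⟩⟩
    · intro h; rcases h with h|h|h|h|h|h|h|h <;> omega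
    · rintro (h | h)
      · exact arc4 (by omega) (by omega) (by omega)
      · exact arc7 (by omega) (by omega)
  · refine ⟨a + 3, a - 2, by omega, by omega, by omega, fun b hb => ⟨?_, ?_⟩⟩
    · intro h; rcases h with h|h|h|h|h|h|h|h <;> omega
    · rintro (h | h)
      · exact arc3 (by omega) (by omega) (by omega)
      · exact arc4 (by omega) (by omega) (by omega)

lemma in_val (n : ℕ) (hn : n % 2 = 0) (h6 : 6 ≤ n) (a : ℕ) (ha : a < n) :
    ∃ A B : ℕ, A < n ∧ B < n ∧ A ≠ B ∧ ∀ b, b < n → (arcRel n b a ↔ (b = A ∨ b = B)) := by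
  by_cases h0 : a = 0
  · refine ⟨1, 2, by omega, by omega, by omega, fun b hb => ⟨?_, ?_⟩⟩
    · intro h; rcases h with h|h|h|h|h|h|h|h <;> omega
    · rintro (h | h)
      · exact arc6 (by omega) (by omega)
      · exact arc2 (by omega) (by omega) (by omega)
  by_cases h2 : a = 2
  · refine ⟨0, 4, by omega, by omega, by omega, fun b hb => ⟨?_, ?_⟩⟩
    · intro h; rcases h with h|h|h|h|h|h|h|h <;> omega
    · rintro (h | h)
      · exact arc5 (by omega) (by omega)
      · exact arc2 (by omega) (by omega) (by omega)
  by_cases hp : a % 2 = 0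
  · by_cases ht : a + 2 = n
    · refine ⟨n - 5, n - 1, by omega, by omega, by omega, fun b hb => ⟨?_, ?_⟩⟩
      · intro h; rcases h with h|h|h|h|h|h|h|h <;> omega
      · rintro (h | h)
        · exact arc3 (by omega) (by omega) (by omega)
        · exact arc8 (by omega) (by omega)
    · refine ⟨a - 3, a + 2, by omega, by omega, by omega, fun b hb => ⟨?_, ?_⟩⟩
      · intro h; rcases h with h|h|h|h|h|h|h|h <;> omega
      · rintro (h | h)
        · exact arc3 (by omega) (by omega) (by omega)
        · exact arc2 (by omega) (by omega) (by omega)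
  · by_cases ht : a + 1 = n
    · refine ⟨n - 2, n - 3, by omega, by omega, by omega, fun b hb => ⟨?_, ?_⟩⟩
      · intro h; rcases h with h|h|h|h|h|h|h|h <;> omega
      · rintro (h | h)
        · exact arc1 (by omega) (by omega)
        · exact arc7 (by omega) (by omega)
    · refine ⟨a - 1, a + 2, by omega, by omega, by omega, fun b hb => ⟨?_, ?_⟩⟩
      · intro h; rcases h with h|h|h|h|h|h|h|h <;> omega
      · rintro (h | h)
        · exact arc1 (by omega) (by omega)
        · exact arc4 (by omega) (by omega) (by omega)

lemma dg_outDeg (n : ℕ) (hn : n % 2 = 0) (h6 : 6 ≤ n) (v : Fin n) : Digraph.outDeg (Dg n) v = 2 := by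
  obtain ⟨A, B, hA, hB, hAB, hiff⟩ := out_val n hn h6 v.val v.isLt
  have hset : {w : Fin n | (Dg n).Adj v w} = {(⟨A, hA⟩ : Fin n), ⟨B, hB⟩} := by
    ext w
    simp only [Set.mem_setOf_eq, Set.mem_insert_iff, Set.mem_singleton_iff, Fin.ext_iff]
    exact hiff w.val w.isLt
  rw [Digraph.outDeg, hset]
  exact Set.ncard_pair (by simp only [ne_eq, Fin.mk.injEq]; omega)

lemma dg_inDeg (n : ℕ) (hn : n % 2 = 0) (h6 : 6 ≤ n) (v : Fin n) : Digraph.inDeg (Dg n) v = 2 := by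
  obtain ⟨A, B, hA, hB, hAB, hiff⟩ := in_val n hn h6 v.val v.isLt
  have hset : {w : Fin n | (Dg n).Adj w v} = {(⟨A, hA⟩ : Fin n), ⟨B, hB⟩} := by
    ext w
    simp only [Set.mem_setOf_eq, Set.mem_insert_iff, Set.mem_singleton_iff, Fin.ext_iff]
    exact hiff w.val w.isLt
  rw [Digraph.inDeg, hset]
  exact Set.ncard_pair (by simp only [ne_eq, Fin.mk.injEq]; omega)

set_option maxHeartbeats 1000000 in
lemma cycles_le_four (n : ℕ) (hn : n % 2 = 0) (h6 : 6 ≤ n) (m : ℕ) (hm : 1 ≤ m)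
    (f : ZMod m → Fin n) (hinj : Function.Injective f)
    (hadj : ∀ i, arcRel n (f i).val (f (i + 1)).val) : m ≤ 4 := by
  by_contra hlt
  push_neg at hlt
  have hm5 : 5 ≤ m := hlt
  haveI : NeZero m := ⟨by omega⟩
  obtain ⟨i0, hmax⟩ := Finite.exists_max fun i => (f i).val
  set j : ZMod m := i0 - ((3 : ℕ) : ZMod m) with hj
  have hj3 : j + ((3 : ℕ) : ZMod m) = i0 := by rw [hj]; ring
  have hp : ∀ c d : ℕ, c + 1 = d → (j + (c : ZMod m)) + 1 = j + (d : ZMod m) := by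
    intro c d h; subst h; push_cast; ring
  have A0 : arcRel n (f (j + ((0:ℕ):ZMod m))).val (f (j + ((1:ℕ):ZMod m))).val := by
    have := hadj (j + ((0:ℕ):ZMod m)); rwa [hp 0 1 rfl] at this
  have A1 : arcRel n (f (j + ((1:ℕ):ZMod m))).val (f (j + ((2:ℕ):ZMod m))).val := by
    have := hadj (j + ((1:ℕ):ZMod m)); rwa [hp 1 2 rfl] at this
  have A2 : arcRel n (f (j + ((2:ℕ):ZMod m))).val (f (j + ((3:ℕ):ZMod m))).val := by
    have := hadj (j + ((2:ℕ):ZMod m)); rwa [hp 2 3 rfl] at this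
  have A3 : arcRel n (f (j + ((3:ℕ):ZMod m))).val (f (j + ((4:ℕ):ZMod m))).val := by
    have := hadj (j + ((3:ℕ):ZMod m)); rwa [hp 3 4 rfl] at this
  have A4 : arcRel n (f (j + ((4:ℕ):ZMod m))).val (f (j + ((5:ℕ):ZMod m))).val := by
    have := hadj (j + ((4:ℕ):ZMod m)); rwa [hp 4 5 rfl] at this
  have A5 : arcRel n (f (j + ((5:ℕ):ZMod m))).val (f (j + ((6:ℕ):ZMod m))).val := by
    have := hadj (j + ((5:ℕ):ZMod m)); rwa [hp 5 6 rfl] at this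
  have close : ∀ s t : ℕ, s < t → t ≤ s + 4 →
      (f (j + (s : ZMod m))).val = (f (j + (t : ZMod m))).val → False := by
    intro s t hst ht hval
    have heq : j + (s : ZMod m) = j + (t : ZMod m) := hinj (Fin.val_injective hval)
    have h2 : ((s : ℕ) : ZMod m) = ((t : ℕ) : ZMod m) := by
      have := add_left_cancel heq; exact this
    rw [ZMod.natCast_eq_natCast_iff] at h2
    have h3 := (Nat.modEq_iff_dvd' (Nat.le_of_lt hst)).mp h2
    have h4 := Nat.le_of_dvd (by omega) h3
    omega
  -- abbreviations for the seven values
  set V0 := (f (j + ((0:ℕ):ZMod m))).val with hV0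
  set V1 := (f (j + ((1:ℕ):ZMod m))).val with hV1
  set V2 := (f (j + ((2:ℕ):ZMod m))).val with hV2
  set V3 := (f (j + ((3:ℕ):ZMod m))).val with hV3
  set V4 := (f (j + ((4:ℕ):ZMod m))).val with hV4
  set V5 := (f (j + ((5:ℕ):ZMod m))).val with hV5
  set V6 := (f (j + ((6:ℕ):ZMod m))).val with hV6
  have mx : ∀ i, (f i).val ≤ V3 := by intro i; rw [hV3, hj3]; exact hmax i
  have m0 : V0 ≤ V3 := mx _
  have m1 : V1 ≤ V3 := mx _
  have m2 : V2 ≤ V3 := mx _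
  have m4 : V4 ≤ V3 := mx _
  have m5 : V5 ≤ V3 := mx _
  have m6 : V6 ≤ V3 := mx _
  have l0 : V0 < n := (f _).isLt
  have l1 : V1 < n := (f _).isLt
  have l2 : V2 < n := (f _).isLt
  have l3 : V3 < n := (f _).isLt
  have l4 : V4 < n := (f _).isLt
  have l5 : V5 < n := (f _).isLt
  have l6 : V6 < n := (f _).isLt
  by_cases hM3 : V3 ≤ 3
  · -- all values ≤ 3 : cardinality contradiction
    have hall : ∀ i, (f i).val ≤ 3 := fun i => le_trans (mx i) hM3
    have hginj : Function.Injective (fun i : ZMod m => (⟨(f i).val, by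
        have := hall i; omega⟩ : Fin 4)) := by
      intro a b hab
      apply hinj
      apply Fin.val_injective
      simpa using congrArg Fin.val hab
    have hcard := Fintype.card_le_of_injective _ hginj
    rw [ZMod.card m] at hcard
    simp only [Fintype.card_fin] at hcard
    omega
  push_neg at hM3
  by_cases hTop : V3 + 1 = n
  · -- M = n-1
    have h4 : V4 + 3 = n ∨ V4 + 2 = n := by
      rcases A3 with h|h|h|h|h|h|h|h <;> omega
    have h2 : V2 + 2 = n ∨ V2 + 3 = n := by
      rcases A2 with h|h|h|h|h|h|h|h <;> omega
    rcases h4 with h4 | h4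
    · have h5 : V5 + 5 = n ∨ V5 + 1 = n := by
        rcases A4 with h|h|h|h|h|h|h|h <;> omega
      rcases h5 with h5 | h5
      · rcases h2 with h2 | h2
        · have h1 : V1 + 5 = n ∨ V1 + 1 = n := by
            rcases A1 with h|h|h|h|h|h|h|h <;> omega
          rcases h1 with h1 | h1
          · exact close 1 5 (by omega) (by omega) (by omega)
          · exact close 1 3 (by omega) (by omega) (by omega)
        · exact close 2 4 (by omega) (by omega) (by omega)
      · exact close 3 5 (by omega) (by omega) (by omega)
    · have h5 : V5 + 1 = n ∨ V5 + 4 = n := by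
        rcases A4 with h|h|h|h|h|h|h|h <;> omega
      rcases h5 with h5 | h5
      · exact close 3 5 (by omega) (by omega) (by omega)
      · rcases h2 with h2 | h2
        · exact close 2 4 (by omega) (by omega) (by omega)
        · have h1 : V1 + 4 = n ∨ V1 + 1 = n := by
            rcases A1 with h|h|h|h|h|h|h|h <;> omega
          rcases h1 with h1 | h1
          · exact close 1 5 (by omega) (by omega) (by omega)
          · exact close 1 3 (by omega) (by omega) (by omega)
  by_cases hTop2 : V3 + 2 = n
  · -- M = n-2
    have h4 : V4 + 4 = n := by
      rcases A3 with h|h|h|h|h|h|h|h <;> omega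
    have h2 : V2 + 5 = n := by
      rcases A2 with h|h|h|h|h|h|h|h <;> omega
    have h5 : V5 + 3 = n ∨ V5 + 6 = n := by
      rcases A4 with h|h|h|h|h|h|h|h <;> omega
    rcases h5 with h5 | h5
    · have h6' : V6 + 5 = n := by
        rcases A5 with h|h|h|h|h|h|h|h <;> omega
      exact close 2 6 (by omega) (by omega) (by omega)
    · have h1 : V1 + 6 = n ∨ V1 + 3 = n := by
        rcases A1 with h|h|h|h|h|h|h|h <;> omega
      rcases h1 with h1 | h1
      · exact close 1 5 (by omega) (by omega) (by omega)
      · have h0 : V0 + 4 = n := by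
          rcases A0 with h|h|h|h|h|h|h|h <;> omega
        exact close 0 4 (by omega) (by omega) (by omega)
  by_cases hPar : V3 % 2 = 0
  · -- M even, 4 ≤ M ≤ n-4
    have h4 : V4 + 2 = V3 := by
      rcases A3 with h|h|h|h|h|h|h|h <;> omega
    have h2 : V2 + 3 = V3 := by
      rcases A2 with h|h|h|h|h|h|h|h <;> omega
    have h5 : V5 + 1 = V3 ∨ V5 + 4 = V3 := by
      rcases A4 with h|h|h|h|h|h|h|h <;> omega
    rcases h5 with h5 | h5
    · have h6' : V6 + 3 = V3 := by
        rcases A5 with h|h|h|h|h|h|h|h <;> omega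
      exact close 2 6 (by omega) (by omega) (by omega)
    · have h1 : V1 + 4 = V3 ∨ V1 + 1 = V3 := by
        rcases A1 with h|h|h|h|h|h|h|h <;> omega
      rcases h1 with h1 | h1
      · exact close 1 5 (by omega) (by omega) (by omega)
      · have h0 : V0 + 2 = V3 := by
          rcases A0 with h|h|h|h|h|h|h|h <;> omega
        exact close 0 4 (by omega) (by omega) (by omega)
  · -- M odd, 5 ≤ M ≤ n-3
    have h4 : V4 + 2 = V3 := by
      rcases A3 with h|h|h|h|h|h|h|h <;> omega
    have h2 : V2 + 1 = V3 := by
      rcases A2 with h|h|h|h|h|h|h|h <;> omega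
    have h1 : V1 + 4 = V3 := by
      rcases A1 with h|h|h|h|h|h|h|h <;> omega
    have h5 : V5 + 4 = V3 := by
      rcases A4 with h|h|h|h|h|h|h|h <;> omega
    exact close 1 5 (by omega) (by omega) (by omega)

/-- step relation avoiding `w` -/
def SRel (n : ℕ) (w : Fin n) : Fin n → Fin n → Prop :=
  fun a b => arcRel n a.val b.val ∧ a ≠ w ∧ b ≠ w

lemma walk_of_rtg {V : Type*} {D : Digraph V} {u v : V} (h : Relation.ReflTransGen D.Adj u v) :
    ∃ (N : ℕ) (g : Fin (N + 1) → V), g 0 = u ∧ g (Fin.last N) = v ∧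
      ∀ i : Fin N, D.Adj (g i.castSucc) (g i.succ) := by
  induction h with
  | refl => exact ⟨0, fun _ => u, rfl, rfl, fun i => i.elim0⟩
  | @tail b c hab hbc ih =>
    obtain ⟨N, g, h0, hl, harc⟩ := ih
    refine ⟨N + 1, Fin.snoc g c, ?_, ?_, ?_⟩
    · have e : (0 : Fin (N + 2)) = Fin.castSucc 0 := by
        ext; simp
      rw [e, Fin.snoc_castSucc]; exact h0
    · rw [Fin.snoc_last]
    · intro i
      induction i using Fin.lastCases with
      | last =>
        rw [Fin.succ_last, Fin.snoc_last, Fin.snoc_castSucc, hl]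
        exact hbc
      | cast j =>
        rw [Fin.succ_castSucc, Fin.snoc_castSucc, Fin.snoc_castSucc]
        exact harc j

lemma sstep {n : ℕ} {w a : Fin n} (x : ℕ) (hx : x < n)
    (harc : arcRel n a.val x) (ha : a ≠ w) (hxw : x ≠ w.val) :
    SRel n w a ⟨x, hx⟩ :=
  ⟨harc, ha, fun h => hxw (congrArg Fin.val h)⟩

lemma sstep' {n : ℕ} {w a b : Fin n}
    (harc : arcRel n a.val b.val) (ha : a ≠ w) (hb : b ≠ w) :
    SRel n w a b := ⟨harc, ha, hb⟩

lemma sstep2 {n : ℕ} {w : Fin n} (x y : ℕ) (hx : x < n) (hy : y < n)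
    (harc : arcRel n x y) (hxw : x ≠ w.val) (hyw : y ≠ w.val) :
    SRel n w ⟨x, hx⟩ ⟨y, hy⟩ :=
  ⟨harc, fun h => hxw (congrArg Fin.val h), fun h => hyw (congrArg Fin.val h)⟩

lemma sstep3 {n : ℕ} {w v : Fin n} (x : ℕ) (hx : x < n)
    (harc : arcRel n x v.val) (hxw : x ≠ w.val) (hv : v ≠ w) :
    SRel n w ⟨x, hx⟩ v :=
  ⟨harc, fun h => hxw (congrArg Fin.val h), hv⟩

lemma neW {n : ℕ} {w : Fin n} {x : ℕ} {hx : x < n} (h : x ≠ w.val) :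
    (⟨x, hx⟩ : Fin n) ≠ w := fun he => h (congrArg Fin.val he)

lemma ascent (n : ℕ) (hn : n % 2 = 0) (h6 : 6 ≤ n) (w top : Fin n)
    (htop : (top.val + 1 = n ∧ w.val + 1 ≠ n) ∨ (top.val + 2 = n ∧ w.val + 1 = n)) :
    ∀ d : ℕ, ∀ u : Fin n, u ≠ w → n ≤ u.val + d + 1 →
      Relation.ReflTransGen (SRel n w) u top := by
  have hwl := w.isLt
  have htw : top ≠ w := by
    rcases htop with ⟨h1, h2⟩ | ⟨h1, h2⟩ <;>
      exact fun h => (by have := congrArg Fin.val h; omega : False)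
  intro d
  induction d with
  | zero =>
    intro u hu hb
    have huv : u.val ≠ w.val := fun h => hu (Fin.val_injective h)
    have hul := u.isLt
    rcases htop with ⟨h1, h2⟩ | ⟨h1, h2⟩
    · have : u = top := Fin.val_injective (by omega)
      rw [this]
    · exact absurd (show u.val = w.val by omega) huv
  | succ d ih =>
    intro u hu hb
    have huv : u.val ≠ w.val := fun h => hu (Fin.val_injective h)
    have hul := u.isLt
    by_cases hu1 : u.val + 1 = n
    · rcases htop with ⟨h1, h2⟩ | ⟨h1, h2⟩
      · have : u = top := Fin.val_injective (by omega)
        rw [this]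
      · exact absurd (show u.val = w.val by omega) huv
    by_cases hu2 : u.val + 2 = n
    · rcases htop with ⟨h1, h2⟩ | ⟨h1, h2⟩
      · -- u = n-2 even, top = n-1 : single +1 step
        have : SRel n w u top := sstep' (arc1 (by omega) (by omega)) hu htw
        exact Relation.ReflTransGen.single this
      · have : u = top := Fin.val_injective (by omega)
        rw [this]
    -- now u.val + 3 ≤ n
    by_cases hpar : u.val % 2 = 0
    · by_cases hw : u.val + 1 = w.val
      · by_cases hu0 : u.val = 0
        · -- 0 → 2   (w = 1)
          refine Relation.ReflTransGen.head
            (sstep 2 (by omega) (arc5 (by omega) (by omega)) hu (by omega))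
            (ih ⟨2, by omega⟩ (neW (by omega)) (show n ≤ 2 + d + 1 by omega))
        · -- u → u-2 → u-1 → u+2    (w = u+1, u even ≥ 2)
          refine Relation.ReflTransGen.head
            (sstep (u.val - 2) (by omega) (arc2 (by omega) (by omega) (by omega)) hu (by omega)) ?_
          refine Relation.ReflTransGen.head
            (sstep2 (u.val - 2) (u.val - 1) (by omega) (by omega) (arc1 (by omega) (by omega)) (by omega) (by omega)) ?_
          refine Relation.ReflTransGen.head
            (sstep2 (u.val - 1) (u.val + 2) (by omega) (by omega) (arc3 (by omega) (by omega) (by omega)) (by omega) (by omega)) ?_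
          exact ih ⟨u.val + 2, by omega⟩ (neW (by omega)) (show n ≤ u.val + 2 + d + 1 by omega)
      · -- u → u+1
        refine Relation.ReflTransGen.head
          (sstep (u.val + 1) (by omega) (arc1 (by omega) (by omega)) hu (by omega))
          (ih ⟨u.val + 1, by omega⟩ (neW (by omega)) (show n ≤ u.val + 1 + d + 1 by omega))
    · -- u odd
      by_cases hu3 : u.val + 3 = n
      · -- u = n-3
        rcases htop with ⟨h1, h2⟩ | ⟨h1, h2⟩
        · -- top = n-1 : single arc7 step
          refine Relation.ReflTransGen.head
            (sstep (n - 1) (by omega) (arc7 (by omega) (by omega)) hu (by omega))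
            (ih ⟨n - 1, by omega⟩ (neW (by omega)) (show n ≤ n - 1 + d + 1 by omega))
        · -- w = n-1 : u → n-5 → n-2
          refine Relation.ReflTransGen.head
            (sstep (n - 5) (by omega) (arc4 (by omega) (by omega) (by omega)) hu (by omega)) ?_
          refine Relation.ReflTransGen.head
            (sstep2 (n - 5) (n - 2) (by omega) (by omega) (arc3 (by omega) (by omega) (by omega)) (by omega) (by omega)) ?_
          exact ih ⟨n - 2, by omega⟩ (neW (by omega)) (show n ≤ n - 2 + d + 1 by omega)
      · by_cases hw : u.val + 3 = w.val
        · by_cases hu1' : u.val = 1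
          · -- 1 → 0 → 2 → 3   (w = 4)
            refine Relation.ReflTransGen.head
              (sstep 0 (by omega) (arc6 (by omega) (by omega)) hu (by omega)) ?_
            refine Relation.ReflTransGen.head
              (sstep2 0 2 (by omega) (by omega) (arc5 (by omega) (by omega)) (by omega) (by omega)) ?_
            refine Relation.ReflTransGen.head
              (sstep2 2 3 (by omega) (by omega) (arc1 (by omega) (by omega)) (by omega) (by omega)) ?_
            exact ih ⟨3, by omega⟩ (neW (by omega)) (show n ≤ 3 + d + 1 by omega)
          · -- u → u-2 → u+1   (w = u+3, u odd ≥ 3)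
            refine Relation.ReflTransGen.head
              (sstep (u.val - 2) (by omega) (arc4 (by omega) (by omega) (by omega)) hu (by omega)) ?_
            refine Relation.ReflTransGen.head
              (sstep2 (u.val - 2) (u.val + 1) (by omega) (by omega) (arc3 (by omega) (by omega) (by omega)) (by omega) (by omega)) ?_
            exact ih ⟨u.val + 1, by omega⟩ (neW (by omega)) (show n ≤ u.val + 1 + d + 1 by omega)
        · -- u → u+3
          refine Relation.ReflTransGen.head
            (sstep (u.val + 3) (by omega) (arc3 (by omega) (by omega) (by omega)) hu (by omega))
            (ih ⟨u.val + 3, by omega⟩ (neW (by omega)) (show n ≤ u.val + 3 + d + 1 by omega))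

lemma descent (n : ℕ) (hn : n % 2 = 0) (h6 : 6 ≤ n) (w top : Fin n)
    (htop : (top.val + 1 = n ∧ w.val + 1 ≠ n) ∨ (top.val + 2 = n ∧ w.val + 1 = n)) :
    ∀ d : ℕ, ∀ v : Fin n, v ≠ w → n ≤ v.val + d + 1 →
      Relation.ReflTransGen (SRel n w) top v := by
  have hwl := w.isLt
  have htw : top ≠ w := by
    rcases htop with ⟨h1, h2⟩ | ⟨h1, h2⟩ <;>
      exact fun h => (by have := congrArg Fin.val h; omega : False)
  intro d
  induction d with
  | zero =>
    intro v hv hb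
    have hvv : v.val ≠ w.val := fun h => hv (Fin.val_injective h)
    have hvl := v.isLt
    rcases htop with ⟨h1, h2⟩ | ⟨h1, h2⟩
    · have : top = v := Fin.val_injective (by omega)
      rw [this]
    · exact absurd (show v.val = w.val by omega) hvv
  | succ d ih =>
    intro v hv hb
    have hvv : v.val ≠ w.val := fun h => hv (Fin.val_injective h)
    have hvl := v.isLt
    by_cases hv1 : v.val + 1 = n
    · rcases htop with ⟨h1, h2⟩ | ⟨h1, h2⟩
      · have : top = v := Fin.val_injective (by omega)
        rw [this]
      · exact absurd (show v.val = w.val by omega) hvv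
    by_cases hv2 : v.val + 2 = n
    · rcases htop with ⟨h1, h2⟩ | ⟨h1, h2⟩
      · -- top = n-1 → v = n-2 : arc8
        exact Relation.ReflTransGen.single (sstep' (arc8 (by omega) (by omega)) htw hv)
      · have : top = v := Fin.val_injective (by omega)
        rw [this]
    -- v.val + 3 ≤ n
    by_cases hv0 : v.val = 0
    · by_cases hw1 : w.val = 1
      · -- enter 0 from 2
        refine Relation.ReflTransGen.tail
          (ih ⟨2, by omega⟩ (neW (by omega)) (show n ≤ 2 + d + 1 by omega)) ?_
        exact sstep3 2 (by omega) (arc2 (by omega) (by omega) (by omega)) (by omega) hv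
      · -- enter 0 from 1
        refine Relation.ReflTransGen.tail
          (ih ⟨1, by omega⟩ (neW (by omega)) (show n ≤ 1 + d + 1 by omega)) ?_
        exact sstep3 1 (by omega) (arc6 (by omega) (by omega)) (by omega) hv
    by_cases hv2' : v.val = 2
    · by_cases hw4 : w.val = 4
      · -- 3 → 1 → 0 → 2
        refine Relation.ReflTransGen.tail (Relation.ReflTransGen.tail (Relation.ReflTransGen.tail
          (ih ⟨3, by omega⟩ (neW (by omega)) (show n ≤ 3 + d + 1 by omega))
          (sstep2 3 1 (by omega) (by omega) (arc4 (by omega) (by omega) (by omega)) (by omega) (by omega)))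
          (sstep2 1 0 (by omega) (by omega) (arc6 (by omega) (by omega)) (by omega) (by omega))) ?_
        exact sstep3 0 (by omega) (arc5 (by omega) (by omega)) (by omega) hv
      · -- enter 2 from 4
        refine Relation.ReflTransGen.tail
          (ih ⟨4, by omega⟩ (neW (by omega)) (show n ≤ 4 + d + 1 by omega)) ?_
        exact sstep3 4 (by omega) (arc2 (by omega) (by omega) (by omega)) (by omega) hv
    by_cases hpar : v.val % 2 = 0
    · -- v even, 4 ≤ v ≤ n-4
      by_cases hw : v.val + 2 = w.val
      · -- v+1 → v-1 → v-3 → v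
        refine Relation.ReflTransGen.tail (Relation.ReflTransGen.tail (Relation.ReflTransGen.tail
          (ih ⟨v.val + 1, by omega⟩ (neW (by omega)) (show n ≤ v.val + 1 + d + 1 by omega))
          (sstep2 (v.val + 1) (v.val - 1) (by omega) (by omega) (arc4 (by omega) (by omega) (by omega)) (by omega) (by omega)))
          (sstep2 (v.val - 1) (v.val - 3) (by omega) (by omega) (arc4 (by omega) (by omega) (by omega)) (by omega) (by omega))) ?_
        exact sstep3 (v.val - 3) (by omega) (arc3 (by omega) (by omega) (by omega)) (by omega) hv
      · -- enter from v+2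
        refine Relation.ReflTransGen.tail
          (ih ⟨v.val + 2, by omega⟩ (neW (by omega)) (show n ≤ v.val + 2 + d + 1 by omega)) ?_
        exact sstep3 (v.val + 2) (by omega) (arc2 (by omega) (by omega) (by omega)) (by omega) hv
    · -- v odd, 1 ≤ v ≤ n-3
      by_cases hw : v.val + 2 = w.val
      · -- v+1 → v-1 → v
        refine Relation.ReflTransGen.tail (Relation.ReflTransGen.tail
          (ih ⟨v.val + 1, by omega⟩ (neW (by omega)) (show n ≤ v.val + 1 + d + 1 by omega))
          (sstep2 (v.val + 1) (v.val - 1) (by omega) (by omega) (arc2 (by omega) (by omega) (by omega)) (by omega) (by omega))) ?_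
        exact sstep3 (v.val - 1) (by omega) (arc1 (by omega) (by omega)) (by omega) hv
      · -- enter from v+2
        refine Relation.ReflTransGen.tail
          (ih ⟨v.val + 2, by omega⟩ (neW (by omega)) (show n ≤ v.val + 2 + d + 1 by omega)) ?_
        exact sstep3 (v.val + 2) (by omega) (arc4 (by omega) (by omega) (by omega)) (by omega) hv


lemma rtg_lift (n : ℕ) (w : Fin n) {a b : Fin n} (ha : a ≠ w)
    (h : Relation.ReflTransGen (SRel n w) a b) :
    ∀ hb : b ≠ w,
      Relation.ReflTransGen ((Dg n).deleteVert w).Adj ⟨a, ha⟩ ⟨b, hb⟩ := by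
  induction h with
  | refl => intro hb; exact Relation.ReflTransGen.refl
  | tail h1 h2 ih => intro hc; exact Relation.ReflTransGen.tail (ih h2.2.1) h2.1

lemma dg_conn (n : ℕ) (hn : n % 2 = 0) (h6 : 6 ≤ n) (w : Fin n) :
    ((Dg n).deleteVert w).StronglyConnected := by
  intro u v
  have hwl := w.isLt
  obtain ⟨top, htop⟩ : ∃ top : Fin n,
      (top.val + 1 = n ∧ w.val + 1 ≠ n) ∨ (top.val + 2 = n ∧ w.val + 1 = n) := by
    by_cases hw : w.val + 1 = n
    · exact ⟨⟨n - 2, by omega⟩, Or.inr ⟨show n - 2 + 2 = n by omega, hw⟩⟩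
    · exact ⟨⟨n - 1, by omega⟩, Or.inl ⟨show n - 1 + 1 = n by omega, hw⟩⟩
  have h1 := ascent n hn h6 w top htop n u.1 u.2 (by omega)
  have h2 := descent n hn h6 w top htop n v.1 v.2 (by omega)
  have h4 := rtg_lift n w u.2 (Relation.ReflTransGen.trans h1 h2) v.2
  obtain ⟨N, g, hg0, hgl, harc⟩ := walk_of_rtg h4
  exact ⟨N, g, hg0, hgl, harc⟩

def cyc : ℕ → ℕ
  | 0 => 1
  | 1 => 4
  | 2 => 2
  | _ => 3

lemma cyc_bound : ∀ t, t < 4 → 1 ≤ cyc t ∧ cyc t ≤ 4 := by decide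

lemma cyc_inj : Function.Injective (fun i : ZMod 4 => cyc (ZMod.val i)) := by decide

/-- For every `k ≥ 1` there is a strongly 2-connected digraph in which every vertex has
out-degree 2 and in-degree 2, every directed cycle has length at most 4, and which
contains at least `k` pairwise vertex-disjoint directed cycles of length 4. -/
theorem exists_stronglyTwoConnected_with_disjoint_longest_cycles (k : ℕ) (hk : 1 ≤ k) :
    ∃ (V : Type) (_ : Fintype V) (D : Digraph V),
      (∀ v : V, ¬ D.Adj v v) ∧
      D.StronglyTwoConnected ∧
      (∀ v : V, D.outDeg v = 2 ∧ D.inDeg v = 2) ∧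
      (∀ n : ℕ, D.HasDirCycleOfLen n → n ≤ 4) ∧
      ∃ c : Fin k → (ZMod 4 → V),
        (∀ j, Function.Injective (c j) ∧ ∀ i, D.Adj (c j i) (c j (i + 1))) ∧
        ∀ j j', j ≠ j' → ∀ i i', c j i ≠ c j' i' := by
  have hn : (4 * k + 2) % 2 = 0 := by omega
  have h6 : 6 ≤ 4 * k + 2 := by omega
  refine ⟨Fin (4 * k + 2), inferInstance, Dg (4 * k + 2),
    fun v => dg_irrefl _ h6 v, ⟨?_, dg_conn _ hn h6⟩,
    fun v => ⟨dg_outDeg _ hn h6 v, dg_inDeg _ hn h6 v⟩, ?_, ?_⟩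
  · simp only [Fintype.card_fin]; omega
  · rintro m ⟨hm1, f, hinj, hadj⟩
    exact cycles_le_four (4 * k + 2) hn h6 m hm1 f hinj hadj
  · refine ⟨fun j i => ⟨4 * j.val + cyc (ZMod.val i), ?_⟩, fun j => ⟨?_, ?_⟩, ?_⟩
    · have hj := j.isLt
      have := (cyc_bound (ZMod.val i) (ZMod.val_lt i)).2
      omega
    · -- injectivity
      intro a b hab
      have h1 := congrArg Fin.val hab
      simp only at h1
      exact cyc_inj (Nat.add_left_cancel h1)
    · -- adjacency
      intro i
      have hj := j.isLt
      fin_cases i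
      · show arcRel (4 * k + 2) (4 * j.val + 1) (4 * j.val + 4)
        exact arc3 (by omega) (by omega) (by omega)
      · show arcRel (4 * k + 2) (4 * j.val + 4) (4 * j.val + 2)
        exact arc2 (by omega) (by omega) (by omega)
      · show arcRel (4 * k + 2) (4 * j.val + 2) (4 * j.val + 3)
        exact arc1 (by omega) (by omega)
      · show arcRel (4 * k + 2) (4 * j.val + 3) (4 * j.val + 1)
        exact arc4 (by omega) (by omega) (by omega)
    · -- disjointness
      intro j j' hjj i i' heq
      have hv := congrArg Fin.val heq
      simp only at hv
      have hb1 := cyc_bound (ZMod.val i) (ZMod.val_lt i)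
      have hb2 := cyc_bound (ZMod.val i') (ZMod.val_lt i')
      have : j.val ≠ j'.val := fun h => hjj (Fin.val_injective h)
      omega
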